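/- arXiv:2002.02443 — 2 statements merged into one kernel-verified Lean document; each statement's English description precedes it below -/
import Mathlib

section
/- Let 𝒜 ∈ ℝ^{N×N}, ℬ ∈ ℝ^{N×m}, 𝒞 ∈ ℝ^{r×N}, Σ ∈ ℝ^{N×N} symmetric, and let I ⊆ (0,∞) be the open set of T > 0 for which 𝒜_T := 𝒜 − (1/(2T)) I_N is Hurwitz. For T ∈ I let P_T and Q_T be the unique solutions of 𝒜_T P_T + P_T 𝒜_Tᵀ + (1/T)Σ + ℬℬᵀ = 0 and 𝒜_Tᵀ Q_T + Q_T 𝒜_T + 𝒞ᵀ𝒞 = 0, and let Γ_T := Q_T P_T. Then the maps T ↦ P_T and T ↦ Q_T are differentiable on I, their derivatives ∂_T P_T and ∂_T Q_T are the unique solutions of 𝒜_T (∂_T P_T) + (∂_T P_T) 𝒜_Tᵀ + (1/T²)(P_T − Σ) = 0 and 𝒜_Tᵀ (∂_T Q_T) + (∂_T Q_T) 𝒜_T + (1/T²) Q_T = 0, and ∂_T Γ_T = (∂_T Q_T) P_T + Q_T (∂_T P_T). -/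
open Matrix

attribute [local instance] Matrix.linftyOpNormedRing Matrix.linftyOpNormedAlgebra

/-- A real square matrix is Hurwitz if all its (complex) eigenvalues have negative real part. -/
def IsHurwitz {N : ℕ} (A : Matrix (Fin N) (Fin N) ℝ) : Prop :=
  ∀ μ ∈ spectrum ℂ (A.map (Complex.ofReal : ℝ → ℂ)), μ.re < 0

/-! Write `𝒜_t = 𝒜 - (1/(2t)) I`. Both Lyapunov operators `Y ↦ 𝒜_t Y + Y 𝒜_tᵀ` and
`Y ↦ 𝒜_tᵀ Y + Y 𝒜_t` have the form `C - t⁻¹` for a fixed linear map `C` on matrices. They are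
injective, hence invertible, because `AX = XB` forces `X = 0` when `A` and `B` have disjoint
spectra, and `σ(𝒜_t)`, `σ(-𝒜_tᵀ)` lie in opposite open half-planes. Since `σ(𝒜)` is finite, the
Hurwitz condition on `𝒜_T` is open in `T`, so near `T` the Gramians are `(C - t⁻¹)⁻¹` applied to
a differentiable right-hand side, and are differentiable because operator inversion is.
Differentiating the Lyapunov equations then gives the equations for the derivatives, and the
product rule gives `∂_T Γ_T`. -/

open Polynomial Topology

theorem HasDerivAt.exists_hasDerivAt_of_clm_apply_eventuallyEq {𝕜 E : Type*}
    [NontriviallyNormedField 𝕜] [NormedAddCommGroup E] [NormedSpace 𝕜 E] [CompleteSpace E]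
    {L : 𝕜 → E →L[𝕜] E} {L' : E →L[𝕜] E} {c x : 𝕜 → E} {c' : E} {T : 𝕜}
    (hL : HasDerivAt L L' T) (hc : HasDerivAt c c' T) (hu : IsUnit (L T))
    (hx : ∀ᶠ t in 𝓝 T, L t (x t) = c t) :
    ∃ x', HasDerivAt x x' T ∧ L' (x T) + L T x' = c' := by
  have hunits : ∀ᶠ t in 𝓝 T, IsUnit (L t) :=
    hL.continuousAt.eventually (Units.isOpen.mem_nhds hu)
  have hx_eq : (fun t => Ring.inverse (L t) (c t)) =ᶠ[𝓝 T] x := by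
    filter_upwards [hx, hunits] with t ht hut
    rw [← ht, ← mul_apply_eq_comp, Ring.inverse_mul_cancel _ hut, one_apply_eq_self]
  obtain ⟨x', hx'⟩ : ∃ x', HasDerivAt x x' T :=
    ⟨_, ((hL.differentiableAt.inverse hu).hasDerivAt.clm_apply hc).congr_of_eventuallyEq
      hx_eq.symm⟩
  exact ⟨x', hx', (hL.clm_apply hx').unique (hc.congr_of_eventuallyEq hx)⟩

theorem exists_hasDerivAt_of_eventually_sub_inv_smul_eq {𝕜 E : Type*}
    [NontriviallyNormedField 𝕜] [CompleteSpace 𝕜] [NormedAddCommGroup E] [NormedSpace 𝕜 E]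
    [FiniteDimensional 𝕜 E] {C : E →ₗ[𝕜] E} {x c : 𝕜 → E} {c' : E} {T : 𝕜} (hT : T ≠ 0)
    (hinj : Function.Injective (C - T⁻¹ • LinearMap.id : E →ₗ[𝕜] E)) (hc : HasDerivAt c c' T)
    (hx : ∀ᶠ t in 𝓝 T, C (x t) - t⁻¹ • x t = c t) :
    ∃ x', HasDerivAt x x' T ∧ (T ^ 2)⁻¹ • x T + (C x' - T⁻¹ • x') = c' := by
  have := FiniteDimensional.complete 𝕜 E
  set L : 𝕜 → E →L[𝕜] E := fun t => LinearMap.toContinuousLinearMap C - t⁻¹ • 1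
  have hL : HasDerivAt L ((T ^ 2)⁻¹ • 1) T := by
    simpa using ((hasDerivAt_inv hT).smul_const (1 : E →L[𝕜] E)).const_sub
      (LinearMap.toContinuousLinearMap C)
  have hu : IsUnit (L T) := ContinuousLinearMap.isUnit_iff_bijective.mpr
    ⟨hinj, LinearMap.injective_iff_surjective.mp hinj⟩
  simpa [L] using hL.exists_hasDerivAt_of_clm_apply_eventuallyEq hc hu (by simpa [L] using hx)

theorem Matrix.spectrum_transpose {n K : Type*} [Fintype n] [DecidableEq n] [Field K]
    (A : Matrix n n K) : spectrum K Aᵀ = spectrum K A := by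
  ext μ
  simp only [mem_spectrum_iff_isRoot_charpoly, charpoly_transpose]

theorem SemiconjBy.aeval {R A : Type*} [CommSemiring R] [Semiring A] [Algebra R A]
    {x a b : A} (h : SemiconjBy x a b) (p : R[X]) : SemiconjBy x (aeval a p) (aeval b p) := by
  induction p using Polynomial.induction_on' with
  | add p q hp hq => simpa only [map_add] using hp.add_right hq
  | monomial k c =>
    simpa only [aeval_monomial, Algebra.algebraMap_eq_smul_one, smul_mul_assoc, one_mul]
      using (h.pow_right k).smul_right c

theorem Matrix.eq_zero_of_mul_eq_mul_of_disjoint_spectrum {n K : Type*} [Fintype n]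
    [DecidableEq n] [Field K] [IsAlgClosed K] {A B X : Matrix n n K}
    (hAB : Disjoint (spectrum K A) (spectrum K B)) (h : A * X = X * B) : X = 0 := by
  cases isEmpty_or_nonempty n
  · exact Subsingleton.elim _ _
  -- spectral mapping: `σ(p_A(B)) = p_A(σ(B))` does not contain `0`
  have hunit : IsUnit (aeval B A.charpoly) := by
    rw [← spectrum.zero_notMem_iff K, spectrum.map_polynomial_aeval_of_degree_pos _ _
      (by rw [charpoly_degree_eq_dim]; exact_mod_cast Fintype.card_pos)]
    rintro ⟨μ, hμB, hμA⟩
    exact hAB.notMem_of_mem_right hμB (mem_spectrum_iff_isRoot_charpoly.mpr hμA)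
  -- Cayley–Hamilton
  have hX : X * aeval B A.charpoly = 0 := by
    rw [(SemiconjBy.aeval h.symm A.charpoly).eq, aeval_self_charpoly, zero_mul]
  exact hunit.mul_left_eq_zero.mp hX

section Hurwitz

variable {N : ℕ}

theorem IsHurwitz.transpose {A : Matrix (Fin N) (Fin N) ℝ} (hA : IsHurwitz A) :
    IsHurwitz Aᵀ := by
  intro μ hμ
  rw [transpose_map, spectrum_transpose] at hμ
  exact hA μ hμ

theorem IsHurwitz.eq_zero_of_mul_add_mul_eq_zero {A B X : Matrix (Fin N) (Fin N) ℝ}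
    (hA : IsHurwitz A) (hB : IsHurwitz B) (h : A * X + X * B = 0) : X = 0 := by
  have hdisj : Disjoint (spectrum ℂ (A.map Complex.ofReal))
      (spectrum ℂ (-B.map Complex.ofReal)) := by
    refine Set.disjoint_left.mpr fun μ hμA hμB => ?_
    rw [← spectrum.neg_eq, Set.mem_neg] at hμB
    have := hB (-μ) hμB
    rw [Complex.neg_re] at this
    linarith [hA μ hμA]
  have hmap := congrArg (Complex.ofRealHom.mapMatrix (m := Fin N)) h
  rw [map_add, map_mul, map_mul, map_zero, add_eq_zero_iff_eq_neg, ← mul_neg] at hmap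
  exact map_injective Complex.ofReal_injective
    ((eq_zero_of_mul_eq_mul_of_disjoint_spectrum hdisj hmap).trans
      (Matrix.map_zero _ Complex.ofReal_zero).symm)

theorem isHurwitz_sub_smul_one_iff (A : Matrix (Fin N) (Fin N) ℝ) (c : ℝ) :
    IsHurwitz (A - c • 1) ↔ ∀ μ ∈ spectrum ℂ (A.map Complex.ofReal), μ.re < c := by
  have hmap : (A - c • 1).map Complex.ofReal = A.map Complex.ofReal - algebraMap ℂ _ (c : ℂ) := by
    ext i j
    by_cases h : i = j <;> simp [h, one_apply, algebraMap_matrix_apply]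
  simp [IsHurwitz, hmap, ← spectrum.sub_singleton_eq]

theorem isOpen_setOf_isHurwitz_sub_smul_one (A : Matrix (Fin N) (Fin N) ℝ) :
    IsOpen {T : ℝ | 0 < T ∧ IsHurwitz (A - (1 / (2 * T)) • 1)} := by
  have hset : {T : ℝ | 0 < T ∧ IsHurwitz (A - (1 / (2 * T)) • 1)} = Set.Ioi 0 ∩
      (fun T : ℝ => 1 / (2 * T)) ⁻¹' ⋂ μ ∈ spectrum ℂ (A.map Complex.ofReal), Set.Ioi μ.re := by
    ext T
    simp [isHurwitz_sub_smul_one_iff]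
  rw [hset]
  exact (continuousOn_const.div (continuousOn_const.mul continuousOn_id)
      fun T hT => mul_ne_zero two_ne_zero (ne_of_gt hT)).isOpen_inter_preimage isOpen_Ioi
    ((A.map Complex.ofReal).finite_spectrum.isOpen_biInter fun μ _ => isOpen_Ioi)

theorem shifted_mul_add_mul_shifted (M M' Y : Matrix (Fin N) (Fin N) ℝ) (t : ℝ) :
    (M - (1 / (2 * t)) • 1) * Y + Y * (M' - (1 / (2 * t)) • 1) =
      (LinearMap.mulLeft ℝ M + LinearMap.mulRight ℝ M') Y - t⁻¹ • Y := by
  simp only [sub_mul, mul_sub, smul_mul_assoc, mul_smul_comm, one_mul, mul_one,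
    LinearMap.add_apply, LinearMap.mulLeft_apply, LinearMap.mulRight_apply]
  module

theorem exists_hasDerivAt_of_eventually_shifted_sylvester {M M' : Matrix (Fin N) (Fin N) ℝ}
    {X c : ℝ → Matrix (Fin N) (Fin N) ℝ} {c' : Matrix (Fin N) (Fin N) ℝ} {T : ℝ} (hT : T ≠ 0)
    (hM : IsHurwitz (M - (1 / (2 * T)) • 1)) (hM' : IsHurwitz (M' - (1 / (2 * T)) • 1))
    (hc : HasDerivAt c c' T)
    (hX : ∀ᶠ t in 𝓝 T,
      (M - (1 / (2 * t)) • 1) * X t + X t * (M' - (1 / (2 * t)) • 1) + c t = 0) :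
    ∃ D, HasDerivAt X D T ∧ ∀ Y, (M - (1 / (2 * T)) • 1) * Y + Y * (M' - (1 / (2 * T)) • 1) +
      ((1 / T ^ 2) • X T + c') = 0 ↔ Y = D := by
  set C := LinearMap.mulLeft ℝ M + LinearMap.mulRight ℝ M'
  have hinj : Function.Injective (C - T⁻¹ • LinearMap.id : _ →ₗ[ℝ] _) := by
    refine (injective_iff_map_eq_zero _).mpr fun Y hY => hM.eq_zero_of_mul_add_mul_eq_zero hM' ?_
    rwa [LinearMap.sub_apply, LinearMap.smul_apply, LinearMap.id_apply,
      ← shifted_mul_add_mul_shifted] at hY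
  obtain ⟨D, hD, hDeq⟩ := exists_hasDerivAt_of_eventually_sub_inv_smul_eq (x := X) hT hinj hc.neg
    (hX.mono fun t ht => by
      rwa [← shifted_mul_add_mul_shifted, Pi.neg_apply, eq_neg_iff_add_eq_zero])
  have hCD : C D - T⁻¹ • D = -((1 / T ^ 2) • X T + c') := by
    rw [← neg_eq_iff_eq_neg.mpr hDeq]
    module
  refine ⟨D, hD, fun Y => ?_⟩
  rw [shifted_mul_add_mul_shifted, add_eq_zero_iff_eq_neg, ← hCD]
  exact hinj.eq_iff

end Hurwitz

theorem discounted_gramians_derivative_in_horizon_general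
    {N m r : ℕ} (𝒜 : Matrix (Fin N) (Fin N) ℝ) (ℬ : Matrix (Fin N) (Fin m) ℝ)
    (𝒞 : Matrix (Fin r) (Fin N) ℝ)
    (Sgm : Matrix (Fin N) (Fin N) ℝ)
    (I : Set ℝ)
    (hI : I = {T : ℝ | 0 < T ∧ IsHurwitz (𝒜 - (1 / (2 * T)) • 1)})
    (P Q : ℝ → Matrix (Fin N) (Fin N) ℝ)
    (hP : ∀ T ∈ I, (𝒜 - (1 / (2 * T)) • 1) * P T + P T * (𝒜 - (1 / (2 * T)) • 1)ᵀ +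
        (1 / T) • Sgm + ℬ * ℬᵀ = 0)
    (hQ : ∀ T ∈ I, (𝒜 - (1 / (2 * T)) • 1)ᵀ * Q T + Q T * (𝒜 - (1 / (2 * T)) • 1) +
        𝒞ᵀ * 𝒞 = 0)
    (Γ : ℝ → Matrix (Fin N) (Fin N) ℝ) (hΓ : ∀ T : ℝ, Γ T = Q T * P T) :
    ∀ T ∈ I, ∃ DP DQ : Matrix (Fin N) (Fin N) ℝ,
      HasDerivAt P DP T ∧ HasDerivAt Q DQ T ∧
      (𝒜 - (1 / (2 * T)) • 1) * DP + DP * (𝒜 - (1 / (2 * T)) • 1)ᵀ +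
        (1 / T ^ 2) • (P T - Sgm) = 0 ∧
      (∀ X : Matrix (Fin N) (Fin N) ℝ,
        (𝒜 - (1 / (2 * T)) • 1) * X + X * (𝒜 - (1 / (2 * T)) • 1)ᵀ +
          (1 / T ^ 2) • (P T - Sgm) = 0 → X = DP) ∧
      (𝒜 - (1 / (2 * T)) • 1)ᵀ * DQ + DQ * (𝒜 - (1 / (2 * T)) • 1) +
        (1 / T ^ 2) • Q T = 0 ∧
      (∀ X : Matrix (Fin N) (Fin N) ℝ,
        (𝒜 - (1 / (2 * T)) • 1)ᵀ * X + X * (𝒜 - (1 / (2 * T)) • 1) +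
          (1 / T ^ 2) • Q T = 0 → X = DQ) ∧
      HasDerivAt Γ (DQ * P T + Q T * DP) T := by
  intro T hT
  obtain ⟨hT0, hH⟩ : 0 < T ∧ IsHurwitz (𝒜 - (1 / (2 * T)) • 1) := hI ▸ hT
  have hnhds : I ∈ 𝓝 T := (hI ▸ isOpen_setOf_isHurwitz_sub_smul_one 𝒜).mem_nhds hT
  have htr : ∀ s : ℝ, (𝒜 - s • 1)ᵀ = 𝒜ᵀ - s • 1 := by simp
  have hHt : IsHurwitz (𝒜ᵀ - (1 / (2 * T)) • 1) := htr _ ▸ hH.transpose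
  have hc : HasDerivAt (fun t : ℝ => (1 / t) • Sgm + ℬ * ℬᵀ) (-(T ^ 2)⁻¹ • Sgm) T := by
    simp_rw [one_div]
    -- not `simpa`: the normed and the product topology on matrices agree only up to unfolding
    exact ((hasDerivAt_inv hT0.ne').smul_const Sgm).add_const (ℬ * ℬᵀ)
  obtain ⟨DP, hDP, hPsol⟩ := exists_hasDerivAt_of_eventually_shifted_sylvester hT0.ne' hH hHt hc
    (by filter_upwards [hnhds] with t ht; rw [← htr, ← add_assoc]; exact hP t ht)
  obtain ⟨DQ, hDQ, hQsol⟩ := exists_hasDerivAt_of_eventually_shifted_sylvester hT0.ne' hHt hH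
    (hasDerivAt_const T (𝒞ᵀ * 𝒞))
    (by filter_upwards [hnhds] with t ht; rw [← htr]; exact hQ t ht)
  have hPrhs : (1 / T ^ 2) • (P T - Sgm) = (1 / T ^ 2) • P T + -(T ^ 2)⁻¹ • Sgm := by module
  simp only [← hPrhs] at hPsol
  simp only [add_zero] at hQsol
  simp only [htr]
  exact ⟨DP, DQ, hDP, hDQ, (hPsol DP).mpr rfl, fun X => (hPsol X).mp, (hQsol DQ).mpr rfl,
    fun X => (hQsol X).mp, funext hΓ ▸ hDQ.mul hDP⟩

/-- **Differentiability of the discounted Gramians in the effective time horizon.**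
On the set `I` of `T > 0` for which `𝒜_T = 𝒜 − (1/(2T))I` is Hurwitz, the solutions `P_T`,
`Q_T` of the ALEs `𝒜_T P_T + P_T 𝒜_Tᵀ + (1/T)Σ + ℬℬᵀ = 0`,
`𝒜_Tᵀ Q_T + Q_T 𝒜_T + 𝒞ᵀ𝒞 = 0` are differentiable in `T`; their derivatives are the unique
solutions of `𝒜_T(∂_T P_T) + (∂_T P_T)𝒜_Tᵀ + (1/T²)(P_T − Σ) = 0` and
`𝒜_Tᵀ(∂_T Q_T) + (∂_T Q_T)𝒜_T + (1/T²)Q_T = 0`, and the Hankelian `Γ_T = Q_T P_T` satisfies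
`∂_T Γ_T = (∂_T Q_T)P_T + Q_T(∂_T P_T)`. -/
theorem discounted_gramians_derivative_in_horizon
    {N m r : ℕ} (𝒜 : Matrix (Fin N) (Fin N) ℝ) (ℬ : Matrix (Fin N) (Fin m) ℝ)
    (𝒞 : Matrix (Fin r) (Fin N) ℝ)
    (Sgm : Matrix (Fin N) (Fin N) ℝ) (hSgm : Sgmᵀ = Sgm)
    (I : Set ℝ)
    (hI : I = {T : ℝ | 0 < T ∧ IsHurwitz (𝒜 - (1 / (2 * T)) • 1)})
    (P Q : ℝ → Matrix (Fin N) (Fin N) ℝ)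
    (hP : ∀ T ∈ I, (𝒜 - (1 / (2 * T)) • 1) * P T + P T * (𝒜 - (1 / (2 * T)) • 1)ᵀ +
        (1 / T) • Sgm + ℬ * ℬᵀ = 0)
    (hQ : ∀ T ∈ I, (𝒜 - (1 / (2 * T)) • 1)ᵀ * Q T + Q T * (𝒜 - (1 / (2 * T)) • 1) +
        𝒞ᵀ * 𝒞 = 0)
    (Γ : ℝ → Matrix (Fin N) (Fin N) ℝ) (hΓ : ∀ T : ℝ, Γ T = Q T * P T) :
    ∀ T ∈ I, ∃ DP DQ : Matrix (Fin N) (Fin N) ℝ,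
      HasDerivAt P DP T ∧ HasDerivAt Q DQ T ∧
      (𝒜 - (1 / (2 * T)) • 1) * DP + DP * (𝒜 - (1 / (2 * T)) • 1)ᵀ +
        (1 / T ^ 2) • (P T - Sgm) = 0 ∧
      (∀ X : Matrix (Fin N) (Fin N) ℝ,
        (𝒜 - (1 / (2 * T)) • 1) * X + X * (𝒜 - (1 / (2 * T)) • 1)ᵀ +
          (1 / T ^ 2) • (P T - Sgm) = 0 → X = DP) ∧
      (𝒜 - (1 / (2 * T)) • 1)ᵀ * DQ + DQ * (𝒜 - (1 / (2 * T)) • 1) +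
        (1 / T ^ 2) • Q T = 0 ∧
      (∀ X : Matrix (Fin N) (Fin N) ℝ,
        (𝒜 - (1 / (2 * T)) • 1)ᵀ * X + X * (𝒜 - (1 / (2 * T)) • 1) +
          (1 / T ^ 2) • Q T = 0 → X = DQ) ∧
      HasDerivAt Γ (DQ * P T + Q T * DP) T :=
  discounted_gramians_derivative_in_horizon_general 𝒜 ℬ 𝒞 Sgm I hI P Q hP hQ Γ hΓ
end

section
/- Let 𝒜 ∈ ℝ^{N×N}, ℬ ∈ ℝ^{N×m}, 𝒞 ∈ ℝ^{r×N}, and Σ ∈ ℝ^{N×N} symmetric. For all sufficiently small T > 0 the matrix 𝒜_T := 𝒜 − (1/(2T)) I_N is Hurwitz; let P_T and Q_T be the unique solutions of 𝒜_T P_T + P_T 𝒜_Tᵀ + (1/T)Σ + ℬℬᵀ = 0 and 𝒜_Tᵀ Q_T + Q_T 𝒜_T + 𝒞ᵀ𝒞 = 0, and Γ_T := Q_T P_T. Then, as T → 0+: P_T = Σ + T(𝒜Σ + Σ𝒜ᵀ + ℬℬᵀ) + O(T²), Q_T = T 𝒞ᵀ𝒞 + T²(𝒜ᵀ𝒞ᵀ𝒞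 + 𝒞ᵀ𝒞𝒜) + O(T³), and Γ_T = T 𝒞ᵀ𝒞Σ + T²(𝒞ᵀ𝒞(2𝒜Σ + Σ𝒜ᵀ + ℬℬᵀ) + 𝒜ᵀ𝒞ᵀ𝒞Σ) + O(T³). -/
open Matrix Asymptotics Filter
open scoped Topology

attribute [local instance] Matrix.linftyOpNormedRing Matrix.linftyOpNormedAlgebra

/-!
Multiplying the Lyapunov equations by `T` turns them into fixed-point equations
`P_T = Σ + T (𝒜 P_T + P_T 𝒜ᵀ + ℬℬᵀ)` and `Q_T = T (𝒜ᵀ Q_T + Q_T 𝒜 + 𝒞ᵀ𝒞)`, of the shape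
`X = S + T (L X + C)` with `L` a fixed bounded operator. Such an `X` stays bounded as `T → 0+`,
and substituting the equation into itself gains one power of `T` at each step; the Hankelian
expansion is then the product of the two expansions. The shift `1/(2T)` eventually exceeds the
norm of `𝒜`, which bounds its eigenvalues, so `𝒜_T` is Hurwitz.
-/

-- The factor `‖1‖` is needed because `NormOneClass` fails for the zero algebra (`0 × 0` matrices).
theorem re_le_of_mem_spectrum_sub_algebraMap {A : Type*} [NormedRing A] [NormedAlgebra ℂ A]
    [CompleteSpace A] (a : A) (c : ℂ) {μ : ℂ} (hμ : μ ∈ spectrum ℂ (a - algebraMap ℂ A c)) :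
    μ.re ≤ ‖a‖ * ‖(1 : A)‖ - c.re := by
  rw [← spectrum.sub_singleton_eq] at hμ
  obtain ⟨ν, hν, c, rfl, rfl⟩ := hμ
  have hν_norm := mem_closedBall_zero_iff.mp (spectrum.subset_closedBall_norm_mul a hν)
  rw [Complex.sub_re]
  linarith [Complex.re_le_norm ν]

theorem isHurwitz_sub_smul_one_of_norm_lt {N : ℕ} (A : Matrix (Fin N) (Fin N) ℝ) {c : ℝ}
    (hc : ‖A.map (Complex.ofReal : ℝ → ℂ)‖ * ‖(1 : Matrix (Fin N) (Fin N) ℂ)‖ < c) :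
    IsHurwitz (A - c • 1) := by
  intro μ hμ
  have hmap : (A - c • 1).map (Complex.ofReal : ℝ → ℂ)
      = A.map Complex.ofReal - algebraMap ℂ _ (c : ℂ) := by
    ext i j
    by_cases hij : i = j <;> simp [one_apply, algebraMap_matrix_apply, hij]
  rw [hmap] at hμ
  have hre := re_le_of_mem_spectrum_sub_algebraMap _ _ hμ
  rw [Complex.ofReal_re] at hre
  linarith

theorem eventually_isHurwitz_sub_smul_one {N : ℕ} (A : Matrix (Fin N) (Fin N) ℝ) :
    ∀ᶠ T in 𝓝[>] (0 : ℝ), IsHurwitz (A - (1 / (2 * T)) • 1) := by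
  have hshift : Tendsto (fun T : ℝ => 1 / (2 * T)) (𝓝[>] 0) atTop := by
    simpa only [one_div, mul_inv] using
      tendsto_inv_nhdsGT_zero.const_mul_atTop (by norm_num : (0 : ℝ) < 2⁻¹)
  filter_upwards [hshift.eventually_gt_atTop
    (‖A.map (Complex.ofReal : ℝ → ℂ)‖ * ‖(1 : Matrix (Fin N) (Fin N) ℂ)‖)] with T hT
  exact isHurwitz_sub_smul_one_of_norm_lt A hT

theorem eq_add_smul_of_shifted_sylvester_eq_zero {R : Type*} [Ring R] [Algebra ℝ R]
    {A B X S C : R} {T : ℝ} (hT : T ≠ 0)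
    (h : (A - (1 / (2 * T)) • 1) * X + X * (B - (1 / (2 * T)) • 1) + (1 / T) • S + C = 0) :
    X = S + T • (A * X + X * B + C) := by
  have key : S + T • (A * X + X * B + C) - X =
      T • ((A - (1 / (2 * T)) • 1) * X + X * (B - (1 / (2 * T)) • 1) + (1 / T) • S + C) := by
    simp only [sub_mul, mul_sub, smul_mul_assoc, mul_smul_comm, one_mul, mul_one]
    match_scalars <;> field_simp
    norm_num
  rwa [h, smul_zero, sub_eq_zero, eq_comm] at key

section SylvesterOperator

variable {R : Type*} [NormedRing R] [NormedAlgebra ℝ R]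

noncomputable def sylvesterOperator (A B : R) : R →L[ℝ] R :=
  ContinuousLinearMap.mul ℝ R A + (ContinuousLinearMap.mul ℝ R).flip B

@[simp]
theorem sylvesterOperator_apply (A B X : R) : sylvesterOperator A B X = A * X + X * B := rfl

end SylvesterOperator

section FixedPointExpansion

variable {E : Type*} [NormedAddCommGroup E] [NormedSpace ℝ E] {L : E →L[ℝ] E} {S C : E}
  {X : ℝ → E}

theorem isBigO_smul_apply {l : Filter ℝ} {f : ℝ → E} {g : ℝ → ℝ} (L : E →L[ℝ] E)
    (h : f =O[l] g) : (fun T => T • L (f T)) =O[l] (fun T => T * g T) :=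
  (isBigO_refl (fun T : ℝ => T) l).smul ((L.isBigO_comp f l).trans h)

theorem isBigO_one_of_eq_add_smul (hX : ∀ᶠ T in 𝓝[>] (0 : ℝ), X T = S + T • (L (X T) + C)) :
    X =O[𝓝[>] (0 : ℝ)] (fun _ => (1 : ℝ)) := by
  have hε : (0 : ℝ) < 1 / (2 * ‖L‖ + 2) := by positivity
  refine isBigO_iff.2 ⟨2 * (‖S‖ + ‖C‖), ?_⟩
  filter_upwards [hX, Ioo_mem_nhdsGT hε] with T hXT ⟨hT0, hTε⟩
  have hTL : T * (2 * ‖L‖ + 2) < 1 := (lt_div_iff₀ (by positivity)).mp hTε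
  have hbound : ‖X T‖ ≤ ‖S‖ + T * (‖L‖ * ‖X T‖ + ‖C‖) :=
    calc ‖X T‖ = ‖S + T • (L (X T) + C)‖ := by rw [← hXT]
      _ ≤ ‖S‖ + T * (‖L (X T)‖ + ‖C‖) := by
        grw [norm_add_le, norm_smul, Real.norm_of_nonneg hT0.le, norm_add_le]
      _ ≤ ‖S‖ + T * (‖L‖ * ‖X T‖ + ‖C‖) := by grw [L.le_opNorm]
  rw [norm_one, mul_one]
  nlinarith [norm_nonneg (X T), norm_nonneg L, norm_nonneg C, mul_nonneg hT0.le (norm_nonneg L)]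

theorem sub_isBigO_id_of_eq_add_smul
    (hX : ∀ᶠ T in 𝓝[>] (0 : ℝ), X T = S + T • (L (X T) + C)) :
    (fun T => X T - S) =O[𝓝[>] (0 : ℝ)] (fun T => T) := by
  have hbdd : (fun T => L (X T) + C) =O[𝓝[>] (0 : ℝ)] (fun _ => (1 : ℝ)) :=
    ((L.isBigO_comp X _).trans (isBigO_one_of_eq_add_smul hX)).add (isBigO_const_one ℝ C _)
  refine ((isBigO_refl (fun T : ℝ => T) _).smul hbdd).congr' ?_ (by simp)
  filter_upwards [hX] with T hT
  rw [eq_sub_iff_add_eq, add_comm]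
  exact hT.symm

theorem sub_sub_smul_isBigO_sq_of_eq_add_smul
    (hX : ∀ᶠ T in 𝓝[>] (0 : ℝ), X T = S + T • (L (X T) + C)) :
    (fun T => X T - S - T • (L S + C)) =O[𝓝[>] (0 : ℝ)] (fun T => T ^ 2) := by
  refine (isBigO_smul_apply L (sub_isBigO_id_of_eq_add_smul hX)).congr' ?_
    (Eventually.of_forall fun T => (sq T).symm)
  filter_upwards [hX] with T hT
  conv_rhs => rw [hT]
  simp only [map_sub]
  module

theorem sub_sub_smul_sub_smul_isBigO_cube_of_eq_add_smul
    (hX : ∀ᶠ T in 𝓝[>] (0 : ℝ), X T = S + T • (L (X T) + C)) :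
    (fun T => X T - S - T • (L S + C) - T ^ 2 • L (L S + C))
      =O[𝓝[>] (0 : ℝ)] (fun T => T ^ 3) := by
  refine (isBigO_smul_apply L (sub_sub_smul_isBigO_sq_of_eq_add_smul hX)).congr' ?_
    (Eventually.of_forall fun T => by ring)
  filter_upwards [hX] with T hT
  conv_rhs => rw [hT]
  simp only [map_sub, map_smul]
  module

end FixedPointExpansion

theorem mul_sub_isBigO_cube_of_expansions {R : Type*} [NormedRing R] [NormedAlgebra ℝ R]
    {l : Filter ℝ} (hl : l ≤ 𝓝 0) {X Y : ℝ → R} {S X₁ Y₁ Y₂ : R}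
    (hX : (fun T => X T - S - T • X₁) =O[l] (fun T => T ^ 2))
    (hY : (fun T => Y T - T • Y₁ - T ^ 2 • Y₂) =O[l] (fun T => T ^ 3)) :
    (fun T => Y T * X T - T • (Y₁ * S) - T ^ 2 • (Y₁ * X₁ + Y₂ * S))
      =O[l] (fun T => T ^ 3) := by
  have hX₁ : (fun T => X T - S) =O[l] (fun T => T) := by
    have h := hX.trans ((isLittleO_pow_pow (𝕜 := ℝ) one_lt_two).isBigO.mono hl)
    simp only [pow_one] at h
    have hlin := ((isBigO_refl (fun T : ℝ => T) l).smul (isBigO_const_one ℝ X₁ l)).congr_right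
      fun T => smul_eq_mul T 1 ▸ mul_one T
    exact (h.add hlin).congr_left fun T => sub_add_cancel _ _
  have hY₁ : (fun T => Y T - T • Y₁) =O[l] (fun T => T ^ 2) := by
    have h := hY.trans ((isLittleO_pow_pow (𝕜 := ℝ) (by norm_num : 2 < 3)).isBigO.mono hl)
    have hquad := ((isBigO_refl (fun T : ℝ => T ^ 2) l).smul
      (isBigO_const_one ℝ Y₂ l)).congr_right fun T => smul_eq_mul (T ^ 2) 1 ▸ mul_one (T ^ 2)
    exact (h.add hquad).congr_left fun T => sub_add_cancel _ _
  have hfirst : (fun T => T • (Y₁ * (X T - S - T • X₁))) =O[l] (fun T => T ^ 3) :=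
    ((isBigO_refl (fun T : ℝ => T) l).smul (hX.const_mul_left Y₁)).congr_right
      fun T => by rw [smul_eq_mul]; ring
  have hsecond : (fun T => (Y T - T • Y₁ - T ^ 2 • Y₂) * S) =O[l] (fun T => T ^ 3) :=
    (hY.mul (isBigO_const_one ℝ S l)).congr_right fun T => mul_one (T ^ 3)
  have hthird : (fun T => (Y T - T • Y₁) * (X T - S)) =O[l] (fun T => T ^ 3) :=
    (hY₁.mul hX₁).congr_right fun T => (pow_succ T 2).symm
  refine ((hfirst.add hsecond).add hthird).congr_left fun T => ?_
  simp only [mul_sub, sub_mul, smul_mul_assoc, mul_smul_comm, smul_sub, smul_add]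
  module

theorem discounted_gramians_small_horizon_expansion_general
    {N m r : ℕ} (𝒜 : Matrix (Fin N) (Fin N) ℝ) (ℬ : Matrix (Fin N) (Fin m) ℝ)
    (𝒞 : Matrix (Fin r) (Fin N) ℝ)
    (Sgm : Matrix (Fin N) (Fin N) ℝ)
    (P Q : ℝ → Matrix (Fin N) (Fin N) ℝ)
    (hP : ∀ T : ℝ, 0 < T → IsHurwitz (𝒜 - (1 / (2 * T)) • 1) →
      (𝒜 - (1 / (2 * T)) • 1) * P T + P T * (𝒜 - (1 / (2 * T)) • 1)ᵀ +
        (1 / T) • Sgm + ℬ * ℬᵀ = 0)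
    (hQ : ∀ T : ℝ, 0 < T → IsHurwitz (𝒜 - (1 / (2 * T)) • 1) →
      (𝒜 - (1 / (2 * T)) • 1)ᵀ * Q T + Q T * (𝒜 - (1 / (2 * T)) • 1) + 𝒞ᵀ * 𝒞 = 0) :
    (∀ᶠ T in 𝓝[>] (0 : ℝ), IsHurwitz (𝒜 - (1 / (2 * T)) • 1)) ∧
    (fun T : ℝ => P T - Sgm - T • (𝒜 * Sgm + Sgm * 𝒜ᵀ + ℬ * ℬᵀ))
      =O[𝓝[>] (0 : ℝ)] (fun T : ℝ => T ^ 2) ∧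
    (fun T : ℝ => Q T - T • (𝒞ᵀ * 𝒞) - (T ^ 2) • (𝒜ᵀ * (𝒞ᵀ * 𝒞) + 𝒞ᵀ * 𝒞 * 𝒜))
      =O[𝓝[>] (0 : ℝ)] (fun T : ℝ => T ^ 3) ∧
    (fun T : ℝ => Q T * P T - T • (𝒞ᵀ * 𝒞 * Sgm) -
        (T ^ 2) • (𝒞ᵀ * 𝒞 * ((2 : ℝ) • (𝒜 * Sgm) + Sgm * 𝒜ᵀ + ℬ * ℬᵀ) +
          𝒜ᵀ * (𝒞ᵀ * 𝒞) * Sgm))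
      =O[𝓝[>] (0 : ℝ)] (fun T : ℝ => T ^ 3) := by
  have hHur := eventually_isHurwitz_sub_smul_one 𝒜
  have hPfix : ∀ᶠ T in 𝓝[>] (0 : ℝ),
      P T = Sgm + T • (sylvesterOperator 𝒜 𝒜ᵀ (P T) + ℬ * ℬᵀ) := by
    filter_upwards [self_mem_nhdsWithin, hHur] with T (hT : 0 < T) hHurT
    have hPT := hP T hT hHurT
    rw [transpose_sub, transpose_smul, transpose_one] at hPT
    exact eq_add_smul_of_shifted_sylvester_eq_zero hT.ne' hPT
  have hQfix : ∀ᶠ T in 𝓝[>] (0 : ℝ),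
      Q T = 0 + T • (sylvesterOperator 𝒜ᵀ 𝒜 (Q T) + 𝒞ᵀ * 𝒞) := by
    filter_upwards [self_mem_nhdsWithin, hHur] with T (hT : 0 < T) hHurT
    have hQT := hQ T hT hHurT
    rw [transpose_sub, transpose_smul, transpose_one] at hQT
    exact eq_add_smul_of_shifted_sylvester_eq_zero hT.ne' (by rwa [smul_zero, add_zero])
  have hP₂ := sub_sub_smul_isBigO_sq_of_eq_add_smul hPfix
  have hQ₃ := sub_sub_smul_sub_smul_isBigO_cube_of_eq_add_smul hQfix
  simp only [sylvesterOperator_apply, map_zero, sub_zero, zero_add] at hP₂ hQ₃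
  have hcoef : 𝒞ᵀ * 𝒞 * ((2 : ℝ) • (𝒜 * Sgm) + Sgm * 𝒜ᵀ + ℬ * ℬᵀ) + 𝒜ᵀ * (𝒞ᵀ * 𝒞) * Sgm =
      𝒞ᵀ * 𝒞 * (𝒜 * Sgm + Sgm * 𝒜ᵀ + ℬ * ℬᵀ) + (𝒜ᵀ * (𝒞ᵀ * 𝒞) + 𝒞ᵀ * 𝒞 * 𝒜) * Sgm := by
    simp only [two_smul, mul_add, add_mul, ← mul_assoc]
    abel
  simp only [hcoef]
  exact ⟨hHur, hP₂, hQ₃, mul_sub_isBigO_cube_of_expansions nhdsWithin_le_nhds hP₂ hQ₃⟩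

/-- **Small-horizon expansions of the discounted Gramians and Hankelian.**
For all sufficiently small `T > 0` the matrix `𝒜_T = 𝒜 − (1/(2T))I` is Hurwitz, and the
solutions of the ALEs `𝒜_T P_T + P_T 𝒜_Tᵀ + (1/T)Σ + ℬℬᵀ = 0` and
`𝒜_Tᵀ Q_T + Q_T 𝒜_T + 𝒞ᵀ𝒞 = 0` satisfy, as `T → 0+`,
`P_T = Σ + T(𝒜Σ + Σ𝒜ᵀ + ℬℬᵀ) + O(T²)`, `Q_T = T𝒞ᵀ𝒞 + T²(𝒜ᵀ𝒞ᵀ𝒞 + 𝒞ᵀ𝒞𝒜) + O(T³)` and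
`Γ_T = Q_T P_T = T𝒞ᵀ𝒞Σ + T²(𝒞ᵀ𝒞(2𝒜Σ + Σ𝒜ᵀ + ℬℬᵀ) + 𝒜ᵀ𝒞ᵀ𝒞Σ) + O(T³)`. -/
theorem discounted_gramians_small_horizon_expansion
    {N m r : ℕ} (𝒜 : Matrix (Fin N) (Fin N) ℝ) (ℬ : Matrix (Fin N) (Fin m) ℝ)
    (𝒞 : Matrix (Fin r) (Fin N) ℝ)
    (Sgm : Matrix (Fin N) (Fin N) ℝ) (hSgm : Sgmᵀ = Sgm)
    (P Q : ℝ → Matrix (Fin N) (Fin N) ℝ)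
    (hP : ∀ T : ℝ, 0 < T → IsHurwitz (𝒜 - (1 / (2 * T)) • 1) →
      (𝒜 - (1 / (2 * T)) • 1) * P T + P T * (𝒜 - (1 / (2 * T)) • 1)ᵀ +
        (1 / T) • Sgm + ℬ * ℬᵀ = 0)
    (hQ : ∀ T : ℝ, 0 < T → IsHurwitz (𝒜 - (1 / (2 * T)) • 1) →
      (𝒜 - (1 / (2 * T)) • 1)ᵀ * Q T + Q T * (𝒜 - (1 / (2 * T)) • 1) + 𝒞ᵀ * 𝒞 = 0) :
    (∀ᶠ T in 𝓝[>] (0 : ℝ), IsHurwitz (𝒜 - (1 / (2 * T)) • 1)) ∧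
    (fun T : ℝ => P T - Sgm - T • (𝒜 * Sgm + Sgm * 𝒜ᵀ + ℬ * ℬᵀ))
      =O[𝓝[>] (0 : ℝ)] (fun T : ℝ => T ^ 2) ∧
    (fun T : ℝ => Q T - T • (𝒞ᵀ * 𝒞) - (T ^ 2) • (𝒜ᵀ * (𝒞ᵀ * 𝒞) + 𝒞ᵀ * 𝒞 * 𝒜))
      =O[𝓝[>] (0 : ℝ)] (fun T : ℝ => T ^ 3) ∧
    (fun T : ℝ => Q T * P T - T • (𝒞ᵀ * 𝒞 * Sgm) -
        (T ^ 2) • (𝒞ᵀ * 𝒞 * ((2 : ℝ) • (𝒜 * Sgm) + Sgm * 𝒜ᵀ + ℬ * ℬᵀ) +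
          𝒜ᵀ * (𝒞ᵀ * 𝒞) * Sgm))
      =O[𝓝[>] (0 : ℝ)] (fun T : ℝ => T ^ 3) :=
  discounted_gramians_small_horizon_expansion_general 𝒜 ℬ 𝒞 Sgm P Q hP hQ
end
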